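/- arXiv:2005.05575 — 2 statements merged into one kernel-verified Lean document; each statement's English description precedes it below -/
import Mathlib

section
/- Let Z = (Z_n)_{n=0,...,N} be a strictly positive adapted integrable process, and let H ≥ 0 be an F_N-measurable random variable with H·Z_N integrable. Define π_n := Z_n^{-1} E[H Z_N | F_n] (the real-world pricing formula). Then the process (π_n Z_n)_{n=0,...,N} is a martingale, π_N = H almost surely, and for any nonnegative process V with (V_n Z_n) a supermartingale and V_N = H almost surely, one has π_n ≤ V_n almost surely for all n. -/
open MeasureTheory Filter

variable {Ω : Type*} {m0 : MeasurableSpace Ω}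

/-! A process `X` with `X n ≤ E[X (n+1) | ℱ n]` stays below a process `Y` with
`E[Y (n+1) | ℱ n] ≤ Y n` as soon as it does so at the terminal time, by backward induction and
monotonicity of conditional expectation. Applied to the deflated price `π * Z`, which is the
martingale `E[H Z_N | ℱ n]`, and the deflated portfolio `V * Z`, this gives `π n Z_n ≤ V n Z_n`;
dividing by `Z_n > 0` yields the bound. -/

theorem ae_le_of_condExp_succ_le {μ : Measure Ω}
    {ℱ : ℕ → MeasurableSpace Ω} {N : ℕ} {X Y : ℕ → Ω → ℝ}
    (hX_int : ∀ n, Integrable (X n) μ) (hY_int : ∀ n, Integrable (Y n) μ)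
    (hX_sub : ∀ n < N, X n ≤ᵐ[μ] μ[X (n + 1)|ℱ n])
    (hY_super : ∀ n < N, μ[Y (n + 1)|ℱ n] ≤ᵐ[μ] Y n)
    (hN : X N ≤ᵐ[μ] Y N) {n : ℕ} (hn : n ≤ N) :
    X n ≤ᵐ[μ] Y n := by
  induction hn using Nat.decreasingInduction with
  | self => exact hN
  | of_succ k hk ih =>
    calc X k ≤ᵐ[μ] μ[X (k + 1)|ℱ k] := hX_sub k hk
      _ ≤ᵐ[μ] μ[Y (k + 1)|ℱ k] := condExp_mono (hX_int _) (hY_int _) ih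
      _ ≤ᵐ[μ] Y k := hY_super k hk

theorem real_world_pricing_formula_general
    (ℱ : Filtration ℕ m0) (μ : Measure Ω) [IsProbabilityMeasure μ] (N : ℕ)
    (Z : ℕ → Ω → ℝ) (H : Ω → ℝ)
    (hZ_adapted : Adapted ℱ Z)
    (hZ_pos : ∀ n ω, 0 < Z n ω)
    (hH_meas : StronglyMeasurable[ℱ N] H)
    (hHZ_int : Integrable (fun ω => H ω * Z N ω) μ)
    (π : ℕ → Ω → ℝ)
    (hπ : ∀ n ω, π n ω = (Z n ω)⁻¹ * (μ[fun ω' => H ω' * Z N ω'|ℱ n]) ω) :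
    (∀ n < N, μ[fun ω => π (n + 1) ω * Z (n + 1) ω|ℱ n] =ᵐ[μ] fun ω => π n ω * Z n ω) ∧
    π N =ᵐ[μ] H ∧
    ∀ V : ℕ → Ω → ℝ, (∀ n ω, 0 ≤ V n ω) →
      (∀ n, Integrable (fun ω => V n ω * Z n ω) μ) →
      (∀ n < N, μ[fun ω => V (n + 1) ω * Z (n + 1) ω|ℱ n] ≤ᵐ[μ] fun ω => V n ω * Z n ω) →
      V N =ᵐ[μ] H →
      ∀ n ≤ N, π n ≤ᵐ[μ] V n := by
  have hπZ : ∀ n, (fun ω => π n ω * Z n ω) = μ[fun ω => H ω * Z N ω|ℱ n] :=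
    fun n => funext fun ω => by rw [hπ, mul_comm, mul_inv_cancel_left₀ (hZ_pos n ω).ne']
  have hmart : ∀ n < N, μ[fun ω => π (n + 1) ω * Z (n + 1) ω|ℱ n] =ᵐ[μ] fun ω => π n ω * Z n ω :=
    fun n _ => by
      simpa only [hπZ] using (martingale_condExp _ ℱ μ).condExp_ae_eq n.le_succ
  have hHZ_N : μ[fun ω => H ω * Z N ω|ℱ N] = fun ω => H ω * Z N ω :=
    condExp_of_stronglyMeasurable (ℱ.le N) (hH_meas.mul (hZ_adapted N).stronglyMeasurable) hHZ_int
  have hπ_N : π N =ᵐ[μ] H := Eventually.of_forall fun ω => by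
    rw [hπ, hHZ_N]
    exact (mul_comm _ _).trans (mul_inv_cancel_right₀ (hZ_pos N ω).ne' (H ω))
  refine ⟨hmart, hπ_N, fun V _ hVZ_int hVZ_super hV_N n hn => ?_⟩
  have hπZ_le : (fun ω => π n ω * Z n ω) ≤ᵐ[μ] fun ω => V n ω * Z n ω := by
    refine ae_le_of_condExp_succ_le (fun k => ?_) hVZ_int (fun k hk => (hmart k hk).symm.le)
      hVZ_super ?_ hn
    · rw [hπZ k]; exact integrable_condExp
    · filter_upwards [hπ_N, hV_N] with ω hπω hVω
      rw [hπω, hVω]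
  filter_upwards [hπZ_le] with ω hω
  exact le_of_mul_le_mul_right hω (hZ_pos n ω)

/-- Real-world pricing formula in discrete time: with a strictly positive deflator `Z` and a
nonnegative claim `H` with `H * Z N` integrable, the price process
`π n = (Z n)⁻¹ * E[H * Z N | ℱ n]` satisfies: `π * Z` is a martingale, `π N = H` a.s., and `π`
is a lower bound for every nonnegative process `V` with `V * Z` a supermartingale and
`V N = H` a.s. -/
theorem real_world_pricing_formula
    (ℱ : Filtration ℕ m0) (μ : Measure Ω) [IsProbabilityMeasure μ] (N : ℕ)
    (Z : ℕ → Ω → ℝ) (H : Ω → ℝ)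
    (hZ_adapted : Adapted ℱ Z) (hZ_int : ∀ n, Integrable (Z n) μ)
    (hZ_pos : ∀ n ω, 0 < Z n ω)
    (hH_meas : StronglyMeasurable[ℱ N] H) (hH_nonneg : ∀ ω, 0 ≤ H ω)
    (hHZ_int : Integrable (fun ω => H ω * Z N ω) μ)
    (π : ℕ → Ω → ℝ)
    (hπ : ∀ n ω, π n ω = (Z n ω)⁻¹ * (μ[fun ω' => H ω' * Z N ω'|ℱ n]) ω) :
    (∀ n < N, μ[fun ω => π (n + 1) ω * Z (n + 1) ω|ℱ n] =ᵐ[μ] fun ω => π n ω * Z n ω) ∧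
    π N =ᵐ[μ] H ∧
    ∀ V : ℕ → Ω → ℝ, (∀ n ω, 0 ≤ V n ω) →
      (∀ n, Integrable (fun ω => V n ω * Z n ω) μ) →
      (∀ n < N, μ[fun ω => V (n + 1) ω * Z (n + 1) ω|ℱ n] ≤ᵐ[μ] fun ω => V n ω * Z n ω) →
      V N =ᵐ[μ] H →
      ∀ n ≤ N, π n ≤ᵐ[μ] V n :=
  real_world_pricing_formula_general ℱ μ N Z H hZ_adapted hZ_pos hH_meas hHZ_int π hπ
end

section
/- Suppose there exists a strictly positive process Z = (Z_n)_{n=0,...,N} such that for every nonnegative self-financing portfolio value process V with V_0 = 1 the deflated process (V_n Z_n) is a supermartingale. Then the set of terminal values {V_N : V nonnegative self-financing portfolio, V_0 = 1} is bounded in probability; i.e., for every ε > 0 there exists K > 0 such that P(V_N > K) < ε uniformly over all such portfolios. (Existence of a deflator implies No Unbounded Profit with Bounded Risk.) -/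
open MeasureTheory Filter

variable {Ω : Type*} {m0 : MeasurableSpace Ω}

/-!
A deflated wealth process `V Z` is a nonnegative supermartingale started at `Z 0`, so
`E[V_N Z_N] ≤ E[Z_0]` for every admissible portfolio. Markov's inequality then makes
`{V_N Z_N ≥ K η}` small uniformly in the portfolio, and since `Z_N > 0` the set `{Z_N < η}` is
small for a suitable `η > 0`; outside both sets `V_N ≤ K`.
-/

section

variable {μ : Measure Ω}

theorem integral_le_integral_zero_of_condExp_succ_le {ℱ : Filtration ℕ m0}
    [SigmaFiniteFiltration μ ℱ] {X : ℕ → Ω → ℝ} (hint : ∀ n, Integrable (X n) μ)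
    (hsuper : ∀ n, μ[X (n + 1)|ℱ n] ≤ᵐ[μ] X n) (n : ℕ) :
    ∫ ω, X n ω ∂μ ≤ ∫ ω, X 0 ω ∂μ := by
  induction n with
  | zero => rfl
  | succ n ih =>
    calc ∫ ω, X (n + 1) ω ∂μ = ∫ ω, (μ[X (n + 1)|ℱ n]) ω ∂μ := (integral_condExp (ℱ.le n)).symm
      _ ≤ ∫ ω, X n ω ∂μ := integral_mono_ae integrable_condExp (hint n) (hsuper n)
      _ ≤ ∫ ω, X 0 ω ∂μ := ih

theorem exists_pos_measure_setOf_lt_lt [IsFiniteMeasure μ] {f : Ω → ℝ} (hf : Measurable f)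
    (hf_pos : ∀ ω, 0 < f ω) {ε : ENNReal} (hε : 0 < ε) :
    ∃ η > 0, μ {ω | f ω < η} < ε := by
  have hempty : (⋂ η > (0 : ℝ), {ω | f ω < η}) = ∅ :=
    Set.eq_empty_of_forall_notMem fun ω hω =>
      lt_irrefl (f ω) (Set.mem_iInter₂.1 hω (f ω) (hf_pos ω))
  have htend : Tendsto (fun η => μ {ω | f ω < η}) (nhdsWithin 0 (Set.Ioi 0)) (nhds 0) := by
    have h := tendsto_measure_biInter_gt (μ := μ) (s := fun η => {ω | f ω < η})
      (fun η _ => (measurableSet_lt hf measurable_const).nullMeasurableSet)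
      (fun _ _ _ hle _ h => lt_of_lt_of_le h hle) ⟨1, one_pos, measure_ne_top μ _⟩
    rwa [hempty, measure_empty] at h
  exact ((htend.eventually (gt_mem_nhds hε)).and self_mem_nhdsWithin).exists.imp
    fun η h => ⟨h.2, h.1⟩

theorem measure_setOf_lt_le_add_integral_mul [IsFiniteMeasure μ] {V Z : Ω → ℝ}
    (hV : ∀ ω, 0 ≤ V ω) (hZ : ∀ ω, 0 ≤ Z ω) (hVZ : Integrable (fun ω => V ω * Z ω) μ)
    {K η : ℝ} (hK : 0 < K) (hη : 0 < η) :
    μ {ω | K < V ω} ≤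
      μ {ω | Z ω < η} + ENNReal.ofReal ((∫ ω, V ω * Z ω ∂μ) / (K * η)) := by
  have hKη : 0 < K * η := mul_pos hK hη
  have hcover : {ω | K < V ω} ⊆ {ω | Z ω < η} ∪ {ω | K * η ≤ V ω * Z ω} := by
    intro ω hω
    by_cases hZη : Z ω < η
    · exact Or.inl hZη
    · exact Or.inr (mul_le_mul hω.le (not_lt.1 hZη) hη.le (hV ω))
  have hmarkov : μ {ω | K * η ≤ V ω * Z ω} ≤
      ENNReal.ofReal ((∫ ω, V ω * Z ω ∂μ) / (K * η)) := by
    rw [← ofReal_measureReal (measure_ne_top μ _)]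
    refine ENNReal.ofReal_le_ofReal ((le_div_iff₀' hKη).2 ?_)
    exact mul_meas_ge_le_integral_of_nonneg (.of_forall fun ω => mul_nonneg (hV ω) (hZ ω)) hVZ _
  exact (measure_mono hcover).trans ((measure_union_le _ _).trans (add_le_add_right hmarkov _))

end

theorem deflator_implies_nupbr_general
    (ℱ : Filtration ℕ m0) (μ : Measure Ω) [IsProbabilityMeasure μ] (N d : ℕ)
    (S : ℕ → Ω → Fin d → ℝ)
    (Z : ℕ → Ω → ℝ) (hZ_adapted : StronglyAdapted ℱ Z)
    (hZ_pos : ∀ n ω, 0 < Z n ω)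
    (hsuper : ∀ (δ : ℕ → Ω → Fin d → ℝ) (V : ℕ → Ω → ℝ),
      (∀ n, StronglyMeasurable[ℱ n] (δ (n + 1))) →
      (∀ n ω, V n ω =
        1 + ∑ k ∈ Finset.range n, ∑ i, δ (k + 1) ω i * (S (k + 1) ω i - S k ω i)) →
      (∀ n ω, 0 ≤ V n ω) →
      (∀ n, Integrable (fun ω => V n ω * Z n ω) μ) ∧
      (∀ n, μ[fun ω => V (n + 1) ω * Z (n + 1) ω|ℱ n] ≤ᵐ[μ] fun ω => V n ω * Z n ω)) :
    ∀ ε : ℝ, 0 < ε → ∃ K : ℝ, 0 < K ∧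
      ∀ (δ : ℕ → Ω → Fin d → ℝ) (V : ℕ → Ω → ℝ),
        (∀ n, StronglyMeasurable[ℱ n] (δ (n + 1))) →
        (∀ n ω, V n ω =
          1 + ∑ k ∈ Finset.range n, ∑ i, δ (k + 1) ω i * (S (k + 1) ω i - S k ω i)) →
        (∀ n ω, 0 ≤ V n ω) →
        μ {ω | K < V N ω} < ENNReal.ofReal ε := by
  intro ε hε
  have hZN : Measurable (Z N) := (hZ_adapted N).measurable.mono (ℱ.le N) le_rfl
  obtain ⟨η, hη, hZη⟩ := exists_pos_measure_setOf_lt_lt (μ := μ) hZN (hZ_pos N)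
    (ENNReal.ofReal_pos.2 (half_pos hε))
  set c := ∫ ω, Z 0 ω ∂μ
  have hc : 0 ≤ c := integral_nonneg fun ω => (hZ_pos 0 ω).le
  set K := (2 * c / ε + 1) / η
  have hKη : K * η = 2 * c / ε + 1 := div_mul_cancel₀ _ hη.ne'
  refine ⟨K, by positivity, fun δ V hδ hV hV_nonneg => ?_⟩
  obtain ⟨hint, hstep⟩ := hsuper δ V hδ hV hV_nonneg
  have hV0 : ∀ ω, V 0 ω = 1 := fun ω => by simp [hV 0 ω]
  have hbudget : ∫ ω, V N ω * Z N ω ∂μ ≤ c := by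
    simpa [hV0] using integral_le_integral_zero_of_condExp_succ_le hint hstep N
  have hsmall : (∫ ω, V N ω * Z N ω ∂μ) / (K * η) ≤ ε / 2 := by
    rw [hKη, div_le_iff₀ (by positivity)]
    nlinarith [mul_div_cancel₀ (2 * c) hε.ne']
  calc μ {ω | K < V N ω}
      ≤ μ {ω | Z N ω < η} + ENNReal.ofReal ((∫ ω, V N ω * Z N ω ∂μ) / (K * η)) :=
        measure_setOf_lt_le_add_integral_mul (hV_nonneg N) (fun ω => (hZ_pos N ω).le) (hint N)
          (by positivity) hη
    _ < ENNReal.ofReal (ε / 2) + ENNReal.ofReal (ε / 2) :=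
        ENNReal.add_lt_add_of_lt_of_le ENNReal.ofReal_ne_top hZη (ENNReal.ofReal_le_ofReal hsmall)
    _ = ENNReal.ofReal ε := by
        rw [← ENNReal.ofReal_add (half_pos hε).le (half_pos hε).le, add_halves]

/-- Existence of a deflator implies NUPBR in discrete time: if `Z` is strictly positive with
constant initial value and every nonnegative self-financing portfolio `V` with `V 0 = 1`
deflates to a supermartingale `V * Z`, then the terminal values `V N` of such portfolios are
bounded in probability. -/
theorem deflator_implies_nupbr
    (ℱ : Filtration ℕ m0) (μ : Measure Ω) [IsProbabilityMeasure μ] (N d : ℕ)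
    (S : ℕ → Ω → Fin d → ℝ) (hS_nonneg : ∀ n ω i, 0 ≤ S n ω i)
    (Z : ℕ → Ω → ℝ) (hZ_adapted : StronglyAdapted ℱ Z)
    (hZ_pos : ∀ n ω, 0 < Z n ω)
    (z0 : ℝ) (hz0 : 0 < z0) (hZ0 : ∀ ω, Z 0 ω = z0)
    (hsuper : ∀ (δ : ℕ → Ω → Fin d → ℝ) (V : ℕ → Ω → ℝ),
      (∀ n, StronglyMeasurable[ℱ n] (δ (n + 1))) →
      (∀ n ω, V n ω =
        1 + ∑ k ∈ Finset.range n, ∑ i, δ (k + 1) ω i * (S (k + 1) ω i - S k ω i)) →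
      (∀ n ω, 0 ≤ V n ω) →
      (∀ n, Integrable (fun ω => V n ω * Z n ω) μ) ∧
      (∀ n, μ[fun ω => V (n + 1) ω * Z (n + 1) ω|ℱ n] ≤ᵐ[μ] fun ω => V n ω * Z n ω)) :
    ∀ ε : ℝ, 0 < ε → ∃ K : ℝ, 0 < K ∧
      ∀ (δ : ℕ → Ω → Fin d → ℝ) (V : ℕ → Ω → ℝ),
        (∀ n, StronglyMeasurable[ℱ n] (δ (n + 1))) →
        (∀ n ω, V n ω =
          1 + ∑ k ∈ Finset.range n, ∑ i, δ (k + 1) ω i * (S (k + 1) ω i - S k ω i)) →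
        (∀ n ω, 0 ≤ V n ω) →
        μ {ω | K < V N ω} < ENNReal.ofReal ε :=
  deflator_implies_nupbr_general ℱ μ N d S Z hZ_adapted hZ_pos hsuper
end
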